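/- arXiv:1810.06660 — 4 statements merged into one kernel-verified Lean document; each statement's English description precedes it below -/
import Mathlib

section
/- Let G = (V, E) be a connected regular graph of even order n, and let {V₁, V₂} be a partition of V with |V₁| = |V₂| = n/2. If the subgraphs of G induced on V₁ and on V₂ are both 1-factorable, then G is 1-factorable. -/
open SimpleGraph

/-- The chromatic index (edge-chromatic number) of a graph, defined as the
chromatic number of its line graph. -/
noncomputable def edgeChromaticNumber {V : Type*} (G : SimpleGraph V) : ℕ∞ :=
  G.lineGraph.chromaticNumber

/-- A graph is 1-factorable if its edge set can be partitioned into
perfect matchings (1-factors). -/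
def IsOneFactorable {V : Type*} (G : SimpleGraph V) : Prop :=
  ∃ F : Set G.Subgraph, (∀ M ∈ F, M.IsPerfectMatching) ∧
    ∀ e ∈ G.edgeSet, ∃! M, M ∈ F ∧ e ∈ M.edgeSet

/-- A regular graph is class 1 if its chromatic index equals its degree. -/
def IsClass1 {V : Type*} (G : SimpleGraph V) : Prop :=
  ∃ k : ℕ, (∀ v, Nat.card (G.neighborSet v) = k) ∧ edgeChromaticNumber G = k

/-!
Both halves are regular: a vertex lies on exactly one edge of each 1-factor, so its degree in
`G[V₁]` is the number `d₁` of factors of `G[V₁]`, and likewise `d₂` on `V₂`. In the bipartite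
graph `B` of edges between `V₁` and `V₂` the vertices of `V₁` then have degree `k - d₁` and those of
`V₂` degree `k - d₂`; counting the edges of `B` from both sides, `|V₁| = |V₂|` forces `d₁ = d₂ = d`.
Pairing the factors of the two halves yields `d` perfect matchings of `G` covering all edges inside
the halves, and the `(k - d)`-regular bipartite graph `B` splits into `k - d` perfect matchings by
repeatedly removing one supplied by Hall's theorem.
-/

open Function

namespace SimpleGraph

variable {V W ι κ : Type*}

/-- Factors are spanning graphs on the vertex type of `G` rather than `G.Subgraph`s, so that
factorizations transport along `comap`, `⊕g` and `⊔`. -/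
structure IsOneFactorization (G : SimpleGraph V) (M : ι → SimpleGraph V) : Prop where
  existsUnique_adj : ∀ i v, ∃! w, (M i).Adj v w
  pairwise_disjoint : Pairwise (Disjoint on M)
  iSup_eq : ⨆ i, M i = G

namespace IsOneFactorization

variable {G : SimpleGraph V} {M : ι → SimpleGraph V}

lemma le (h : G.IsOneFactorization M) (i : ι) : M i ≤ G :=
  h.iSup_eq ▸ le_iSup M i

lemma exists_adj (h : G.IsOneFactorization M) {u w : V} (huw : G.Adj u w) :
    ∃ i, (M i).Adj u w := by
  rwa [← h.iSup_eq, iSup_adj] at huw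

lemma eq_of_adj (h : G.IsOneFactorization M) {i j : ι} {u w : V} (hi : (M i).Adj u w)
    (hj : (M j).Adj u w) : i = j := by
  by_contra hij
  exact disjoint_left.mp (h.pairwise_disjoint hij) u w hi hj

lemma isOneFactorable (h : G.IsOneFactorization M) : IsOneFactorable G := by
  refine ⟨Set.range fun i ↦ G.toSubgraph (M i) (h.le i), ?_, ?_⟩
  · rintro _ ⟨i, rfl⟩
    simpa [Subgraph.isPerfectMatching_iff] using h.existsUnique_adj i
  · intro e he
    induction e using Sym2.ind with | _ u w => ?_
    obtain ⟨i, hi⟩ := h.exists_adj he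
    refine ⟨_, ⟨⟨i, rfl⟩, hi⟩, ?_⟩
    rintro _ ⟨⟨j, rfl⟩, hj⟩
    rw [h.eq_of_adj hj hi]

lemma degree_eq (h : G.IsOneFactorization M) (v : V) [Fintype (G.neighborSet v)] :
    G.degree v = Nat.card ι := by
  choose partner hpartner using fun i ↦ h.existsUnique_adj i v
  rw [← card_neighborSet_eq_degree, ← Nat.card_eq_fintype_card]
  refine (Nat.card_eq_of_bijective (fun i ↦ ⟨partner i, h.le i (hpartner i).1⟩) ⟨?_, ?_⟩).symm
  · intro i j hij
    have hw : partner i = partner j := congrArg Subtype.val hij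
    exact h.eq_of_adj (hpartner i).1 (hw ▸ (hpartner j).1)
  · rintro ⟨w, hw⟩
    obtain ⟨i, hi⟩ := h.exists_adj hw
    exact ⟨i, Subtype.ext ((hpartner i).2 w hi).symm⟩

lemma comp_equiv (h : G.IsOneFactorization M) (e : κ ≃ ι) : G.IsOneFactorization (M ∘ e) where
  existsUnique_adj i := h.existsUnique_adj (e i)
  pairwise_disjoint := h.pairwise_disjoint.comp_of_injective e.injective
  iSup_eq := by rw [← h.iSup_eq]; exact e.iSup_comp

lemma comap (h : G.IsOneFactorization M) (f : W ≃ V) :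
    (G.comap f).IsOneFactorization fun i ↦ (M i).comap f where
  existsUnique_adj i v := by
    obtain ⟨w, hw, huniq⟩ := h.existsUnique_adj i (f v)
    refine ⟨f.symm w, by simpa using hw, fun x hx ↦ f.eq_symm_apply.mpr (huniq _ hx)⟩
  pairwise_disjoint i j hij :=
    disjoint_left.mpr fun u w hi hj ↦ disjoint_left.mp (h.pairwise_disjoint hij) _ _ hi hj
  iSup_eq := by
    ext u w
    simp [iSup_adj, ← h.iSup_eq]

lemma sup {G₁ G₂ : SimpleGraph V} {M₁ : ι → SimpleGraph V} {M₂ : κ → SimpleGraph V}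
    (h₁ : G₁.IsOneFactorization M₁) (h₂ : G₂.IsOneFactorization M₂) (hG : Disjoint G₁ G₂) :
    (G₁ ⊔ G₂).IsOneFactorization (Sum.elim M₁ M₂) where
  existsUnique_adj
    | .inl i => h₁.existsUnique_adj i
    | .inr j => h₂.existsUnique_adj j
  pairwise_disjoint
    | .inl i, .inl i', hii' => h₁.pairwise_disjoint (ne_of_apply_ne Sum.inl hii')
    | .inl i, .inr j, _ => hG.mono (h₁.le i) (h₂.le j)
    | .inr j, .inl i, _ => hG.symm.mono (h₂.le j) (h₁.le i)
    | .inr j, .inr j', hjj' => h₂.pairwise_disjoint (ne_of_apply_ne Sum.inr hjj')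
  iSup_eq := by simp only [iSup_sum, Sum.elim_inl, Sum.elim_inr, h₁.iSup_eq, h₂.iSup_eq]

lemma sum {V₁ V₂ : Type*} {G₁ : SimpleGraph V₁} {G₂ : SimpleGraph V₂} {M₁ : ι → SimpleGraph V₁}
    {M₂ : ι → SimpleGraph V₂} (h₁ : G₁.IsOneFactorization M₁) (h₂ : G₂.IsOneFactorization M₂) :
    (G₁ ⊕g G₂).IsOneFactorization fun i ↦ M₁ i ⊕g M₂ i where
  existsUnique_adj i
    | .inl v => by
      obtain ⟨w, hw, huniq⟩ := h₁.existsUnique_adj i v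
      refine ⟨.inl w, by simpa using hw, ?_⟩
      rintro (x | x) hx
      · simpa using huniq x (by simpa using hx)
      · simp at hx
    | .inr v => by
      obtain ⟨w, hw, huniq⟩ := h₂.existsUnique_adj i v
      refine ⟨.inr w, by simpa using hw, ?_⟩
      rintro (x | x) hx
      · simp at hx
      · simpa using huniq x (by simpa using hx)
  pairwise_disjoint i j hij := by
    refine disjoint_left.mpr ?_
    rintro (u | u) (w | w) hi hj <;> simp only [sum_adj_inl, sum_adj_inr] at hi hj
    · exact disjoint_left.mp (h₁.pairwise_disjoint hij) u w hi hj
    · simp at hi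
    · simp at hi
    · exact disjoint_left.mp (h₂.pairwise_disjoint hij) u w hi hj
  iSup_eq := by
    ext (u | u) (w | w) <;> simp [iSup_adj, ← h₁.iSup_eq, ← h₂.iSup_eq]

end IsOneFactorization

lemma isOneFactorization_const_of_existsUnique_adj {P : SimpleGraph V}
    (hP : ∀ v, ∃! w, P.Adj v w) : P.IsOneFactorization fun _ : Fin 1 ↦ P where
  existsUnique_adj _ := hP
  pairwise_disjoint := Subsingleton.pairwise
  iSup_eq := iSup_const

lemma sdiff_between_compl_eq_comap_sum (G : SimpleGraph V) (s : Set V) [DecidablePred (· ∈ s)] :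
    G \ G.between s sᶜ = (G.induce s ⊕g G.induce sᶜ).comap (Equiv.Set.sumCompl s).symm := by
  ext u w
  by_cases hu : u ∈ s <;> by_cases hw : w ∈ s <;>
    simp [between_adj, hu, hw, Equiv.Set.sumCompl_symm_apply_of_mem,
      Equiv.Set.sumCompl_symm_apply_of_notMem]

section Finite

variable [Fintype V] {G : SimpleGraph V} [DecidableRel G.Adj] {r : ℕ}

lemma IsRegularOfDegree.ncard_le_ncard_iUnion_neighborSet (hG : G.IsRegularOfDegree r)
    (hr : 0 < r) (S : Set V) : S.ncard ≤ (⋃ x ∈ S, G.neighborSet x).ncard := by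
  classical
  set N := ⋃ x ∈ S, G.neighborSet x
  rw [Set.ncard_eq_toFinset_card', Set.ncard_eq_toFinset_card']
  -- each vertex of `S` has `r` neighbours in `N`, each vertex of `N` has at most `r` in `S`
  refine Nat.le_of_mul_le_mul_right (Finset.card_mul_le_card_mul G.Adj (m := r) (n := r)
    (fun a ha ↦ ?_) (fun b _ ↦ ?_)) hr
  · rw [← hG a, ← card_neighborFinset_eq_degree]
    refine Finset.card_le_card fun w hw ↦ ?_
    rw [mem_neighborFinset] at hw
    simp only [Finset.bipartiteAbove, Finset.mem_filter, Set.mem_toFinset]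
    exact ⟨Set.mem_biUnion (Set.mem_toFinset.mp ha) hw, hw⟩
  · rw [← hG b, ← card_neighborFinset_eq_degree]
    refine Finset.card_le_card fun w hw ↦ ?_
    simp only [Finset.bipartiteBelow, Finset.mem_filter] at hw
    exact (mem_neighborFinset _ _ _).mpr hw.2.symm

lemma IsRegularOfDegree.exists_isPerfectMatching {s t : Set V} (hG : G.IsRegularOfDegree r)
    (hr : 0 < r) (hst : G.IsBipartiteWith s t) : ∃ M : G.Subgraph, M.IsPerfectMatching :=
  exists_isPerfectMatching_of_forall_ncard_le hst (hG.ncard_le_ncard_iUnion_neighborSet hr)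

lemma IsRegularOfDegree.sdiff {P : SimpleGraph V} [DecidableRel P.Adj]
    (hG : G.IsRegularOfDegree (r + 1)) (hPG : P ≤ G) (hP : ∀ v, ∃! w, P.Adj v w) :
    (G \ P).IsRegularOfDegree r := by
  classical
  intro v
  have hPv : P.degree v = 1 := degree_eq_one_iff_existsUnique_adj.mpr (hP v)
  have hsub : P.neighborFinset v ⊆ G.neighborFinset v := by
    simpa [neighborFinset_def] using neighborSet_mono hPG v
  rw [← card_neighborFinset_eq_degree, neighborFinset_sdiff, Finset.card_sdiff_of_subset hsub,
    card_neighborFinset_eq_degree, card_neighborFinset_eq_degree, hG v, hPv, Nat.add_sub_cancel]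

lemma IsBipartiteWith.exists_isOneFactorization {s t : Set V} (hst : G.IsBipartiteWith s t)
    (hG : G.IsRegularOfDegree r) : ∃ M : Fin r → SimpleGraph V, G.IsOneFactorization M := by
  induction r generalizing G with
  | zero =>
    refine ⟨Fin.elim0, fun i ↦ i.elim0, fun i ↦ i.elim0, ?_⟩
    ext u w
    have hu := hG u
    rw [← card_neighborFinset_eq_degree, Finset.card_eq_zero] at hu
    simp [← mem_neighborFinset, hu]
  | succ r ih =>
    classical
    obtain ⟨M, hM⟩ := hG.exists_isPerfectMatching r.succ_pos hst
    have hP : ∀ v, ∃! w, M.spanningCoe.Adj v w := Subgraph.isPerfectMatching_iff.mp hM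
    obtain ⟨N, hN⟩ := ih (G := G \ M.spanningCoe) ⟨hst.disjoint, fun v w h ↦ hst.mem_of_adj h.1⟩
      (hG.sdiff M.spanningCoe_le hP)
    have hG' := (hN.sup (isOneFactorization_const_of_existsUnique_adj hP)
      disjoint_sdiff_self_left).comp_equiv finSumFinEquiv.symm
    rw [sdiff_sup_cancel M.spanningCoe_le] at hG'
    exact ⟨_, hG'⟩

lemma degree_induce_add_degree_between {s : Set V} [DecidablePred (· ∈ s)] {v : V}
    (hv : v ∈ s) : (G.induce s).degree ⟨v, hv⟩ + (G.between s sᶜ).degree v = G.degree v := by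
  classical
  have hind : ((G.induce s).neighborFinset ⟨v, hv⟩).card =
      (G.neighborFinset v ∩ s.toFinset).card := by
    rw [← map_neighborFinset_induce ⟨v, hv⟩, Finset.card_map]
  have hbetween : (G.between s sᶜ).neighborFinset v = G.neighborFinset v \ s.toFinset := by
    ext w
    simp [between_adj, hv]
  rw [← card_neighborFinset_eq_degree, hind, ← card_neighborFinset_eq_degree, hbetween,
    ← card_neighborFinset_eq_degree, Finset.card_inter_add_card_sdiff]

lemma degree_induce_compl_add_degree_between {s : Set V} [DecidablePred (· ∈ s)] {v : V}
    (hv : v ∈ sᶜ) : (G.induce sᶜ).degree ⟨v, hv⟩ + (G.between s sᶜ).degree v = G.degree v := by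
  convert G.degree_induce_add_degree_between hv using 3
  rw [compl_compl, between_comm]

section Halves

variable {s : Set V} [DecidablePred (· ∈ s)] {k d d₁ d₂ : ℕ}

lemma IsRegularOfDegree.eq_of_degree_induce [Nonempty V] (hG : G.IsRegularOfDegree k)
    (h₁ : ∀ v : s, (G.induce s).degree v = d₁) (h₂ : ∀ v : ↥sᶜ, (G.induce sᶜ).degree v = d₂)
    (hcard : Nat.card s = Nat.card ↥sᶜ) : d₁ = d₂ := by
  classical
  set B := G.between s sᶜ
  have hn : s.toFinset.card = sᶜ.toFinset.card := by
    simpa only [Nat.card_eq_card_toFinset] using hcard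
  have hpos : 0 < sᶜ.toFinset.card := by
    obtain ⟨v⟩ := ‹Nonempty V›
    by_cases hv : v ∈ s
    · exact hn ▸ Finset.card_pos.mpr ⟨v, by simpa⟩
    · exact Finset.card_pos.mpr ⟨v, by simpa⟩
  have hB : ∑ v ∈ s.toFinset, B.degree v = ∑ v ∈ sᶜ.toFinset, B.degree v :=
    isBipartiteWith_sum_degrees_eq (by simpa using between_isBipartiteWith disjoint_compl_right)
  have hsum₁ : ∑ v ∈ s.toFinset, (B.degree v + d₁) = s.toFinset.card * k :=
    Finset.sum_const_nat fun v hv ↦ by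
      rw [add_comm, ← h₁ ⟨v, Set.mem_toFinset.mp hv⟩, degree_induce_add_degree_between, hG]
  have hsum₂ : ∑ v ∈ sᶜ.toFinset, (B.degree v + d₂) = sᶜ.toFinset.card * k :=
    Finset.sum_const_nat fun v hv ↦ by
      rw [add_comm, ← h₂ ⟨v, Set.mem_toFinset.mp hv⟩, degree_induce_compl_add_degree_between, hG]
  rw [Finset.sum_add_distrib, Finset.sum_const, smul_eq_mul] at hsum₁ hsum₂
  rw [hB, hn] at hsum₁
  exact Nat.eq_of_mul_eq_mul_left hpos (by omega)

lemma IsRegularOfDegree.between (hG : G.IsRegularOfDegree k)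
    (h₁ : ∀ v : s, (G.induce s).degree v = d) (h₂ : ∀ v : ↥sᶜ, (G.induce sᶜ).degree v = d) :
    (G.between s sᶜ).IsRegularOfDegree (k - d) := by
  intro v
  by_cases hv : v ∈ s
  · have := G.degree_induce_add_degree_between hv
    rw [h₁, hG] at this
    omega
  · have := G.degree_induce_compl_add_degree_between (s := s) hv
    rw [h₂, hG] at this
    omega

end Halves

end Finite

end SimpleGraph

lemma IsOneFactorable.exists_isOneFactorization {V : Type*} [Finite V] {G : SimpleGraph V}
    (hG : IsOneFactorable G) : ∃ (d : ℕ) (M : Fin d → SimpleGraph V), G.IsOneFactorization M := by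
  obtain ⟨F, hperfect, hunique⟩ := hG
  let e := Finite.equivFin F
  refine ⟨Nat.card F, fun i ↦ (e.symm i).1.spanningCoe, fun i ↦ ?_, fun i j hij ↦ ?_, ?_⟩
  · simpa [Subgraph.isPerfectMatching_iff] using hperfect _ (e.symm i).2
  · refine disjoint_left.mpr fun u w hi hj ↦ hij (e.symm.injective (Subtype.ext ?_))
    obtain ⟨N, -, huniq⟩ := hunique s(u, w) ((e.symm i).1.adj_sub hi)
    exact (huniq _ ⟨(e.symm i).2, hi⟩).trans (huniq _ ⟨(e.symm j).2, hj⟩).symm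
  · ext u w
    simp only [iSup_adj, Subgraph.spanningCoe_adj]
    refine ⟨fun ⟨i, hi⟩ ↦ (e.symm i).1.adj_sub hi, fun huw ↦ ?_⟩
    obtain ⟨N, ⟨hN, hNuw⟩, -⟩ := hunique s(u, w) huw
    exact ⟨e ⟨N, hN⟩, by rwa [Equiv.symm_apply_apply]⟩

lemma isOneFactorable_of_isEmpty {V : Type*} [IsEmpty V] (G : SimpleGraph V) :
    IsOneFactorable G :=
  ⟨∅, by simp, fun e ↦ by induction e using Sym2.ind with | _ u _ => exact isEmptyElim u⟩

theorem stmt_2_general {V : Type*} [Fintype V] (G : SimpleGraph V) [DecidableRel G.Adj] (k : ℕ)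
    (hreg : G.IsRegularOfDegree k)
    (V₁ : Set V)
    (hcard1 : Nat.card V₁ = Fintype.card V / 2)
    (hcard2 : Nat.card ↥(V₁ᶜ) = Fintype.card V / 2)
    (hf1 : IsOneFactorable (G.induce V₁))
    (hf2 : IsOneFactorable (G.induce V₁ᶜ)) :
    IsOneFactorable G := by
  classical
  rcases isEmpty_or_nonempty V with _ | _
  · exact isOneFactorable_of_isEmpty G
  obtain ⟨d, M₁, hM₁⟩ := hf1.exists_isOneFactorization
  obtain ⟨d', M₂, hM₂⟩ := hf2.exists_isOneFactorization
  have hdeg₁ (v : V₁) : (G.induce V₁).degree v = d := by simp [hM₁.degree_eq]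
  have hdeg₂ (v : ↥V₁ᶜ) : (G.induce V₁ᶜ).degree v = d' := by simp [hM₂.degree_eq]
  obtain rfl : d = d' := hreg.eq_of_degree_induce hdeg₁ hdeg₂ (hcard1.trans hcard2.symm)
  obtain ⟨N, hN⟩ :=
    (between_isBipartiteWith disjoint_compl_right).exists_isOneFactorization
      (hreg.between hdeg₁ hdeg₂)
  have hinner := (hM₁.sum hM₂).comap (Equiv.Set.sumCompl V₁).symm
  rw [← sdiff_between_compl_eq_comap_sum] at hinner
  have hG := hinner.sup hN disjoint_sdiff_self_left
  rw [sdiff_sup_cancel between_le] at hG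
  exact hG.isOneFactorable

/-- Lemma 2.2(i): if a connected regular graph `G` of even order `n` has a partition of its
vertex set into two halves `V₁, V₂` of size `n/2` such that the induced subgraphs on `V₁` and
`V₂` are both 1-factorable, then `G` is 1-factorable. -/
theorem stmt_2 {V : Type*} [Fintype V] (G : SimpleGraph V) [DecidableRel G.Adj] (k : ℕ)
    (hconn : G.Connected) (hreg : G.IsRegularOfDegree k)
    (heven : Even (Fintype.card V)) (V₁ : Set V)
    (hcard1 : Nat.card V₁ = Fintype.card V / 2)
    (hcard2 : Nat.card ↥(V₁ᶜ) = Fintype.card V / 2)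
    (hf1 : IsOneFactorable (G.induce V₁))
    (hf2 : IsOneFactorable (G.induce V₁ᶜ)) :
    IsOneFactorable G :=
  stmt_2_general G k hreg V₁ hcard1 hcard2 hf1 hf2
end

section
/- Let G = (V, E) be a connected regular graph of even order n, and let {V₁, V₂} be a partition of V with |V₁| = |V₂| = n/2. If V₁ is a clique of G or a coclique (independent set) of G, then G is class 1. -/
/-!
Counting the edges between the two halves in two ways shows that, in a regular graph split into
two halves of equal size, one half is a clique (resp. a coclique) exactly when the other one is.

In the coclique case `G` is a `k`-regular bipartite graph. By Hall's theorem it has a perfect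
matching, whose removal leaves a `(k - 1)`-regular bipartite graph; inductively this gives a
`k`-edge-colouring (König).

In the clique case the edges between the halves form a `t`-regular bipartite graph, with `t ≥ 1`
because `G` is connected, and `k = (m - 1) + t` where `m` is the size of a half. A perfect matching
`M` of it together with the two cliques forms the prism `K_m □ K_2`, which is `m`-edge-colourable,
and the remaining `(t - 1)`-regular bipartite graph takes `t - 1` further colours.

Conversely, the `k` edges at any vertex need `k` distinct colours.
-/

open SimpleGraph

open Finset

namespace SimpleGraph

variable {V : Type*} {G H : SimpleGraph V}

section EdgeColoring

theorem Colorable.lineGraph_of_le (h : G ≤ H) {n : ℕ} (hc : H.lineGraph.Colorable n) :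
    G.lineGraph.Colorable n :=
  hc.of_hom (IsContained.of_le h).lineGraph.some.toHom

theorem exists_adj_adj_of_lineGraph_adj {e₁ e₂ : G.edgeSet} (h : G.lineGraph.Adj e₁ e₂) :
    ∃ u v w, G.Adj u v ∧ G.Adj u w ∧ v ≠ w ∧
      (e₁ : Sym2 V) = s(u, v) ∧ (e₂ : Sym2 V) = s(u, w) := by
  obtain ⟨hne, u, hu₁, hu₂⟩ := lineGraph_adj_iff_exists.mp h
  obtain ⟨v, hv⟩ := Sym2.mem_iff_exists.mp hu₁
  obtain ⟨w, hw⟩ := Sym2.mem_iff_exists.mp hu₂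
  refine ⟨u, v, w, G.mem_edgeSet.mp (hv ▸ e₁.2), G.mem_edgeSet.mp (hw ▸ e₂.2), ?_, hv, hw⟩
  rintro rfl
  exact hne (Subtype.ext (hv.trans hw.symm))

theorem Colorable.lineGraph_sup {a b : ℕ} (hG : G.lineGraph.Colorable a)
    (hH : H.lineGraph.Colorable b) : (G ⊔ H).lineGraph.Colorable (a + b) := by
  classical
  obtain ⟨C⟩ := hG
  obtain ⟨D⟩ := hH
  have mem_H {e : Sym2 V} (he : e ∈ (G ⊔ H).edgeSet) (hG : e ∉ G.edgeSet) : e ∈ H.edgeSet := by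
    rw [edgeSet_sup] at he
    exact he.resolve_left hG
  have hsep (x : Fin a) (y : Fin b) : Fin.castAdd b x ≠ Fin.natAdd a y :=
    Fin.ne_of_val_ne (by simp only [Fin.val_castAdd, Fin.val_natAdd]; omega)
  refine ⟨Coloring.mk (fun e => if he : e.1 ∈ G.edgeSet then Fin.castAdd b (C ⟨e, he⟩)
    else Fin.natAdd a (D ⟨e, mem_H e.2 he⟩)) ?_⟩
  rintro ⟨e₁, h₁⟩ ⟨e₂, h₂⟩ ⟨hne, hshare⟩
  have hne' : e₁ ≠ e₂ := fun h => hne (Subtype.ext h)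
  dsimp only
  split_ifs
  · exact (Fin.castAdd_injective _ _).ne (C.valid ⟨fun h => hne' congr(($h).1), hshare⟩)
  · exact hsep _ _
  · exact (hsep _ _).symm
  · exact (Fin.natAdd_injective _ _).ne (D.valid ⟨fun h => hne' congr(($h).1), hshare⟩)

theorem Subgraph.IsMatching.lineGraph_colorable_one {M : G.Subgraph} (hM : M.IsMatching) :
    M.spanningCoe.lineGraph.Colorable 1 := by
  refine ⟨Coloring.mk (fun _ => 0) fun h => ?_⟩
  obtain ⟨u, v, w, hv, hw, hvw, -, -⟩ := exists_adj_adj_of_lineGraph_adj h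
  exact absurd (hM.eq_of_adj_left hv hw) hvw

theorem lineGraph_colorable_of_injOn {m : ℕ} (ℓ : V → Fin m)
    (hℓ : ∀ v, Set.InjOn ℓ (G.neighborSet v)) : G.lineGraph.Colorable m := by
  refine ⟨Coloring.mk (fun e => Sym2.lift ⟨fun v w => ℓ v + ℓ w, fun _ _ => add_comm _ _⟩ e)
    fun h => ?_⟩
  obtain ⟨u, v, w, hv, hw, hvw, h₁, h₂⟩ := exists_adj_adj_of_lineGraph_adj h
  have : NeZero m := ⟨fun hm => (hm ▸ ℓ u).elim0⟩
  rw [h₁, h₂, Sym2.lift_mk, Sym2.lift_mk]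
  exact fun h => hvw (hℓ u hv hw (add_left_cancel h))

variable [Fintype V] [DecidableRel G.Adj]

theorem degree_le_chromaticNumber_lineGraph (v : V) :
    (G.degree v : ℕ∞) ≤ G.lineGraph.chromaticNumber := by
  classical
  let S := (G.incidenceFinset v).subtype (· ∈ G.edgeSet)
  have hS : #S = G.degree v := by
    rw [card_subtype, filter_true_of_mem fun e he => ((G.mem_incidenceFinset v e).mp he).1,
      card_incidenceFinset_eq_degree]
  have hclique : G.lineGraph.IsClique (S : Set G.edgeSet) := by
    intro e₁ he₁ e₂ he₂ hne
    simp only [S, mem_coe, mem_subtype, mem_incidenceFinset] at he₁ he₂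
    exact lineGraph_adj_iff_exists.mpr ⟨hne, v, he₁.2, he₂.2⟩
  exact hS ▸ hclique.card_le_chromaticNumber

theorem IsRegularOfDegree.chromaticNumber_lineGraph_eq [Nonempty V] {k : ℕ}
    (hreg : G.IsRegularOfDegree k) (hc : G.lineGraph.Colorable k) :
    G.lineGraph.chromaticNumber = k :=
  le_antisymm hc.chromaticNumber_le
    (hreg (Classical.arbitrary V) ▸ degree_le_chromaticNumber_lineGraph _)

end EdgeColoring

section RegularBipartite

variable {s t : Set V}

theorem IsBipartiteWith.mono (h : G.IsBipartiteWith s t) (hle : H ≤ G) :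
    H.IsBipartiteWith s t :=
  ⟨h.disjoint, fun _ _ hadj => h.mem_of_adj (hle hadj)⟩

theorem isBipartiteWith_compl_of_isIndepSet (h : G.IsIndepSet s) (h' : G.IsIndepSet sᶜ) :
    G.IsBipartiteWith s sᶜ := by
  refine ⟨disjoint_compl_right, fun v w hvw => ?_⟩
  by_cases hv : v ∈ s <;> by_cases hw : w ∈ s
  · exact absurd hvw (h hv hw (G.ne_of_adj hvw))
  · exact .inl ⟨hv, hw⟩
  · exact .inr ⟨hv, hw⟩
  · exact absurd hvw (h' hv hw (G.ne_of_adj hvw))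

variable [Fintype V]

theorem Subgraph.IsPerfectMatching.isRegularOfDegree_one {M : G.Subgraph}
    [DecidableRel M.spanningCoe.Adj] (hM : M.IsPerfectMatching) :
    M.spanningCoe.IsRegularOfDegree 1 := by
  classical
  intro v
  rw [degree_spanningCoe]
  exact isPerfectMatching_iff_forall_degree.mp hM v

variable [DecidableRel G.Adj] {k : ℕ}

theorem IsRegularOfDegree.card_le_card_biUnion_neighborFinset [DecidableEq V]
    (hreg : G.IsRegularOfDegree k) (hk : 0 < k) (S : Finset V) :
    #S ≤ #(S.biUnion fun v => G.neighborFinset v) := by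
  set T := S.biUnion fun v => G.neighborFinset v
  refine le_of_mul_le_mul_right ?_ hk
  calc #S * k = ∑ v ∈ S, #(T.bipartiteAbove G.Adj v) := by
        refine (sum_const_nat fun v hv => ?_).symm
        rw [bipartiteAbove, ← hreg v, ← card_neighborFinset_eq_degree]
        congr 1
        ext w
        simp only [mem_filter, mem_neighborFinset, and_iff_right_iff_imp, T, mem_biUnion]
        exact fun h => ⟨v, hv, h⟩
    _ = ∑ w ∈ T, #(S.bipartiteBelow G.Adj w) :=
        sum_card_bipartiteAbove_eq_sum_card_bipartiteBelow _
    _ ≤ ∑ w ∈ T, k := sum_le_sum fun w _ => by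
        rw [← hreg w, ← card_neighborFinset_eq_degree]
        exact card_le_card fun v hv => (G.mem_neighborFinset w v).mpr (mem_filter.mp hv).2.symm
    _ = #T * k := by rw [sum_const, smul_eq_mul]

theorem IsRegularOfDegree.exists_isPerfectMatching_s3 (hbip : G.IsBipartiteWith s t)
    (hreg : G.IsRegularOfDegree k) (hk : 0 < k) : ∃ M : G.Subgraph, M.IsPerfectMatching := by
  classical
  refine exists_isPerfectMatching_of_forall_ncard_le hbip fun S => ?_
  have hN : (⋃ x ∈ S, G.neighborSet x) = ↑(S.toFinset.biUnion fun v => G.neighborFinset v) := by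
    ext
    simp
  rw [hN, Set.ncard_coe_finset, Set.ncard_eq_toFinset_card']
  exact hreg.card_le_card_biUnion_neighborFinset hk S.toFinset

theorem IsRegularOfDegree.sdiff_s3 [DecidableRel H.Adj] {l : ℕ} (hG : G.IsRegularOfDegree (k + l))
    (hH : H.IsRegularOfDegree l) (hle : H ≤ G) : (G \ H).IsRegularOfDegree k := by
  classical
  intro v
  rw [← card_neighborFinset_eq_degree, neighborFinset_sdiff,
    card_sdiff_of_subset (fun w hw => by simpa using hle (by simpa using hw)),
    card_neighborFinset_eq_degree, card_neighborFinset_eq_degree, hG v, hH v, Nat.add_sub_cancel]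

theorem IsBipartiteWith.lineGraph_colorable (hbip : G.IsBipartiteWith s t)
    (hreg : G.IsRegularOfDegree k) : G.lineGraph.Colorable k := by
  induction k generalizing G with
  | zero =>
    have : IsEmpty G.edgeSet := ⟨fun ⟨e, he⟩ => by
      induction e with
      | h v w =>
        have := (G.degree_pos_iff_exists_adj v).mpr ⟨w, he⟩
        rw [hreg v] at this
        exact this.false⟩
    exact .of_isEmpty 0
  | succ k ih =>
    classical
    obtain ⟨M, hM⟩ := hreg.exists_isPerfectMatching_s3 hbip k.succ_pos
    have hle : M.spanningCoe ≤ G := Subgraph.spanningCoe_le M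
    have hrest := ih (hbip.mono sdiff_le) (hreg.sdiff_s3 hM.isRegularOfDegree_one hle)
    rw [← sdiff_sup_cancel hle]
    exact hrest.lineGraph_sup hM.1.lineGraph_colorable_one

end RegularBipartite

section DoubleCounting

variable [DecidableEq V] [DecidableRel G.Adj] {k : ℕ} {s : Finset V}

theorem filter_adj_subset_erase (s : Finset V) (v : V) : {w ∈ s | G.Adj v w} ⊆ s.erase v :=
  fun _ hw => mem_erase.mpr ⟨(G.ne_of_adj (mem_filter.mp hw).2).symm, (mem_filter.mp hw).1⟩

theorem IsClique.card_filter_adj (h : G.IsClique (s : Set V)) {v : V} (hv : v ∈ s) :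
    #{w ∈ s | G.Adj v w} = #s - 1 := by
  rw [← card_erase_of_mem hv]
  refine congrArg card (subset_antisymm (filter_adj_subset_erase s v) fun w hw => ?_)
  obtain ⟨hwv, hw⟩ := mem_erase.mp hw
  exact mem_filter.mpr ⟨hw, h hv hw hwv.symm⟩

variable [Fintype V]

theorem card_filter_adj_add_card_filter_adj_compl (s : Finset V) (v : V) :
    #{w ∈ s | G.Adj v w} + #{w ∈ sᶜ | G.Adj v w} = G.degree v := by
  rw [← card_union_of_disjoint (disjoint_filter_filter disjoint_compl_right), ← filter_union,
    union_compl, ← neighborFinset_eq_filter, card_neighborFinset_eq_degree]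

theorem IsRegularOfDegree.sum_card_filter_adj_eq (hreg : G.IsRegularOfDegree k)
    (hs : #s = #sᶜ) :
    ∑ v ∈ s, #{w ∈ s | G.Adj v w} = ∑ v ∈ sᶜ, #{w ∈ sᶜ | G.Adj v w} := by
  have hcross : ∑ v ∈ s, #{w ∈ sᶜ | G.Adj v w} = ∑ v ∈ sᶜ, #{w ∈ s | G.Adj v w} := by
    simpa [bipartiteAbove, bipartiteBelow, G.adj_comm] using
      sum_card_bipartiteAbove_eq_sum_card_bipartiteBelow (s := s) (t := sᶜ) G.Adj
  have hdeg (t : Finset V) :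
      ∑ v ∈ t, #{w ∈ s | G.Adj v w} + ∑ v ∈ t, #{w ∈ sᶜ | G.Adj v w} = #t * k := by
    rw [← sum_add_distrib, sum_congr rfl fun v _ =>
      (card_filter_adj_add_card_filter_adj_compl s v).trans (hreg v), sum_const, smul_eq_mul]
  have hs_deg := hdeg s
  have hsc_deg := hdeg sᶜ
  rw [hs] at hs_deg
  omega

theorem IsRegularOfDegree.isIndepSet_compl (hreg : G.IsRegularOfDegree k) (hs : #s = #sᶜ)
    (h : G.IsIndepSet (s : Set V)) : G.IsIndepSet (s : Set V)ᶜ := by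
  have hzero : ∑ v ∈ s, #{w ∈ s | G.Adj v w} = 0 :=
    sum_eq_zero fun v hv => card_eq_zero.mpr <|
      filter_eq_empty_iff.mpr fun w hw hadj => h hv hw (G.ne_of_adj hadj) hadj
  rw [hreg.sum_card_filter_adj_eq hs, sum_eq_zero_iff] at hzero
  intro v hv w hw _ hadj
  exact filter_eq_empty_iff.mp (card_eq_zero.mp (hzero v (by simpa using hv))) (by simpa using hw)
    hadj

theorem IsRegularOfDegree.isClique_compl (hreg : G.IsRegularOfDegree k) (hs : #s = #sᶜ)
    (h : G.IsClique (s : Set V)) : G.IsClique (s : Set V)ᶜ := by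
  have hle : ∀ v ∈ sᶜ, #{w ∈ sᶜ | G.Adj v w} ≤ #s - 1 := fun v hv => by
    rw [hs, ← card_erase_of_mem hv]
    exact card_le_card (filter_adj_subset_erase _ v)
  have hsum : ∑ v ∈ sᶜ, #{w ∈ sᶜ | G.Adj v w} = ∑ _v ∈ sᶜ, (#s - 1) := by
    rw [← hreg.sum_card_filter_adj_eq hs, sum_congr rfl fun v hv => h.card_filter_adj hv,
      sum_const, sum_const, hs]
  have hfull := (sum_eq_sum_iff_of_le hle).mp hsum
  intro v hv w hw hvw
  rw [← coe_compl, mem_coe] at hv hw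
  have heq : {w ∈ sᶜ | G.Adj v w} = sᶜ.erase v :=
    eq_of_subset_of_card_le (filter_adj_subset_erase _ v)
      (by rw [card_erase_of_mem hv, hfull v hv, hs])
  have hw' : w ∈ {w ∈ sᶜ | G.Adj v w} := heq ▸ mem_erase.mpr ⟨hvw.symm, hw⟩
  exact (mem_filter.mp hw').2

theorem neighborFinset_between_compl_of_mem {v : V} (hv : v ∈ s) :
    (G.between s sᶜ).neighborFinset v = {w ∈ sᶜ | G.Adj v w} := by
  ext w
  simp [between_adj, hv, and_comm]

theorem neighborFinset_between_compl_of_notMem {v : V} (hv : v ∉ s) :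
    (G.between s sᶜ).neighborFinset v = {w ∈ s | G.Adj v w} := by
  ext w
  simp [between_adj, hv, and_comm]

theorem IsRegularOfDegree.between_compl_of_isClique (hreg : G.IsRegularOfDegree k)
    (hs : #s = #sᶜ) (h : G.IsClique (s : Set V)) :
    (G.between s sᶜ).IsRegularOfDegree (k + 1 - #s) := by
  have h' := hreg.isClique_compl hs h
  intro v
  have hsplit := (card_filter_adj_add_card_filter_adj_compl s v).trans (hreg v)
  rw [← card_neighborFinset_eq_degree]
  by_cases hv : v ∈ s
  · rw [neighborFinset_between_compl_of_mem hv]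
    rw [h.card_filter_adj hv] at hsplit
    have := card_pos.mpr ⟨v, hv⟩
    omega
  · rw [← coe_compl] at h'
    rw [neighborFinset_between_compl_of_notMem hv]
    rw [h'.card_filter_adj (mem_compl.mpr hv), ← hs] at hsplit
    have := card_pos.mpr ⟨v, mem_compl.mpr hv⟩
    omega

end DoubleCounting

/-- This graph is the prism `K_m □ K_2` over the halves `s` and `sᶜ`. Labelling a vertex of `sᶜ`
by its `M`-partner in `s` makes the labels injective on every neighbourhood. -/
theorem Subgraph.IsPerfectMatching.lineGraph_colorable_prism [DecidableEq V] {s : Finset V}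
    {M : G.Subgraph} (hM : M.IsPerfectMatching) (hbip : G.IsBipartiteWith s sᶜ) :
    (fromRel (fun v w => v ∈ s ↔ w ∈ s) ⊔ M.spanningCoe).lineGraph.Colorable #s := by
  set P := fromRel (fun v w => v ∈ s ↔ w ∈ s) ⊔ M.spanningCoe
  choose σ hσ using fun v => (isPerfectMatching_iff.mp hM v).exists
  have hside {v w : V} (hvw : M.Adj v w) : v ∈ s ↔ w ∉ s := by
    rcases hbip.mem_of_adj (M.adj_sub hvw) with ⟨hv, hw⟩ | ⟨hv, hw⟩ <;> simp_all
  let π (v : V) : s :=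
    if hv : v ∈ s then ⟨v, hv⟩ else ⟨σ v, not_not.mp ((hside (hσ v)).not.mp hv)⟩
  have hπ {w w' : V} (h : π w = π w') : w = w' ∨ M.Adj w w' := by
    simp only [π] at h
    split_ifs at h <;> simp only [Subtype.mk.injEq] at h
    · exact .inl h
    · exact .inr (h ▸ hσ w').symm
    · exact .inr (h ▸ hσ w)
    · exact .inl (hM.1.eq_of_adj_right (hσ w) (h ▸ hσ w'))
  have hcross {u w : V} (huw : P.Adj u w) (hdiff : ¬(u ∈ s ↔ w ∈ s)) : M.Adj u w := by
    rcases huw with ⟨-, h | h⟩ | h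
    · exact absurd h hdiff
    · exact absurd h.symm hdiff
    · exact h
  refine lineGraph_colorable_of_injOn (fun v => s.equivFin (π v)) fun u w hw w' hw' heq => ?_
  refine (hπ (s.equivFin.injective heq)).resolve_right fun hww' => ?_
  by_cases hu : u ∈ s ↔ w ∈ s
  · have huw' := hcross hw' (by have := hside hww'; tauto)
    exact P.ne_of_adj hw (hM.1.eq_of_adj_right huw' hww')
  · exact P.ne_of_adj hw' (hM.1.eq_of_adj_right (hcross hw hu) hww'.symm)

theorem Preconnected.exists_adj_mem_notMem (h : G.Preconnected) {s : Set V} {u v : V}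
    (hu : u ∈ s) (hv : v ∉ s) : ∃ x y, G.Adj x y ∧ x ∈ s ∧ y ∉ s :=
  let ⟨d, _, hd₁, hd₂⟩ := (h u v).some.exists_boundary_dart s hu hv
  ⟨d.fst, d.snd, d.adj, hd₁, hd₂⟩

section Halves

variable [Fintype V] [DecidableEq V] [DecidableRel G.Adj] {k : ℕ} {s : Finset V}

theorem IsRegularOfDegree.lineGraph_colorable_of_isIndepSet (hreg : G.IsRegularOfDegree k)
    (hs : #s = #sᶜ) (h : G.IsIndepSet (s : Set V)) : G.lineGraph.Colorable k :=
  (isBipartiteWith_compl_of_isIndepSet h (hreg.isIndepSet_compl hs h)).lineGraph_colorable hreg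

theorem IsRegularOfDegree.lineGraph_colorable_of_isClique (hreg : G.IsRegularOfDegree k)
    (hconn : G.Connected) (hs : #s = #sᶜ) (h : G.IsClique (s : Set V)) :
    G.lineGraph.Colorable k := by
  set C := G.between s sᶜ
  have hbip : C.IsBipartiteWith s sᶜ := between_isBipartiteWith disjoint_compl_right
  have hCreg := hreg.between_compl_of_isClique hs h
  obtain ⟨t, ht⟩ : ∃ t, k + 1 - #s = t + 1 := by
    have : Nonempty V := hconn.nonempty
    have hpos : 0 < #s := by
      have := card_add_card_compl s
      have := Fintype.card_pos (α := V)
      omega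
    obtain ⟨u, hu⟩ : s.Nonempty := card_pos.mp hpos
    obtain ⟨v, hv⟩ : sᶜ.Nonempty := card_pos.mp (hs ▸ hpos)
    obtain ⟨x, y, hxy, hx, hy⟩ :=
      hconn.preconnected.exists_adj_mem_notMem (s := s) hu (mem_compl.mp hv)
    have := (C.degree_pos_iff_exists_adj x).mpr ⟨y, hxy, .inl ⟨hx, hy⟩⟩
    exact ⟨k - #s, by rw [hCreg x] at this; omega⟩
  rw [ht] at hCreg
  classical
  obtain ⟨M, hM⟩ := hCreg.exists_isPerfectMatching_s3 hbip t.succ_pos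
  have hle : G ≤ (fromRel (fun v w => v ∈ s ↔ w ∈ s) ⊔ M.spanningCoe) ⊔ (C \ M.spanningCoe) := by
    intro v w hvw
    by_cases hside : v ∈ s ↔ w ∈ s
    · exact .inl (.inl ⟨G.ne_of_adj hvw, .inl hside⟩)
    by_cases hvw_M : M.Adj v w
    · exact .inl (.inr hvw_M)
    · refine .inr ⟨⟨hvw, ?_⟩, hvw_M⟩
      simp only [Set.mem_compl_iff, mem_coe]
      tauto
  have hP := hM.lineGraph_colorable_prism hbip
  have hR := (hbip.mono sdiff_le).lineGraph_colorable
    (hCreg.sdiff_s3 hM.isRegularOfDegree_one (Subgraph.spanningCoe_le M))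
  have hk : #s + t = k := by omega
  exact hk ▸ (hP.lineGraph_sup hR).lineGraph_of_le hle

end Halves

end SimpleGraph

theorem stmt_3_general {V : Type*} [Fintype V] (G : SimpleGraph V) [DecidableRel G.Adj] (k : ℕ)
    (hconn : G.Connected) (hreg : G.IsRegularOfDegree k) (V₁ : Set V)
    (hcard1 : Nat.card V₁ = Fintype.card V / 2)
    (hcard2 : Nat.card ↥(V₁ᶜ) = Fintype.card V / 2)
    (hcc : G.IsClique V₁ ∨ V₁.Pairwise fun a b => ¬ G.Adj a b) :
    edgeChromaticNumber G = k := by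
  classical
  have : Nonempty V := hconn.nonempty
  have hs : #V₁.toFinset = #V₁.toFinsetᶜ := by
    rw [← Set.toFinset_compl, ← Nat.card_eq_card_toFinset, ← Nat.card_eq_card_toFinset, hcard1,
      hcard2]
  refine hreg.chromaticNumber_lineGraph_eq ?_
  rcases hcc with hclique | hindep
  · exact hreg.lineGraph_colorable_of_isClique hconn hs (by simpa using hclique)
  · exact hreg.lineGraph_colorable_of_isIndepSet hs (by simpa using hindep)

/-- Lemma 2.2(ii): if a connected regular graph `G` of even order `n` has a partition of its
vertex set into two halves `V₁, V₂` of size `n/2` such that `V₁` is a clique or a coclique,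
then `G` is class 1. -/
theorem stmt_3 {V : Type*} [Fintype V] (G : SimpleGraph V) [DecidableRel G.Adj] (k : ℕ)
    (hconn : G.Connected) (hreg : G.IsRegularOfDegree k)
    (heven : Even (Fintype.card V)) (V₁ : Set V)
    (hcard1 : Nat.card V₁ = Fintype.card V / 2)
    (hcard2 : Nat.card ↥(V₁ᶜ) = Fintype.card V / 2)
    (hcc : G.IsClique V₁ ∨ V₁.Pairwise fun a b => ¬ G.Adj a b) :
    edgeChromaticNumber G = k :=
  stmt_3_general G k hconn hreg V₁ hcard1 hcard2 hcc
end

section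
/- Let m be an odd positive integer and let G be the graph on 2m vertices consisting of two disjoint cliques of order m together with a perfect matching between them (given by a bijection between the two cliques). Then G is m-regular and class 1, i.e., its chromatic index equals m. -/
open SimpleGraph

set_option maxHeartbeats 1000000 in
/-- Let `m` be an odd positive integer and `G` the graph consisting of two disjoint cliques of
order `m` together with a perfect matching between them given by a bijection `e`. Then `G` is
`m`-regular and class 1: its chromatic index equals `m`. -/
theorem stmt_4 (m : ℕ) (hodd : Odd m) (hpos : 0 < m) (e : Fin m ≃ Fin m)
    (G : SimpleGraph (Fin m ⊕ Fin m)) [DecidableRel G.Adj]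
    (h11 : ∀ i j, G.Adj (.inl i) (.inl j) ↔ i ≠ j)
    (h22 : ∀ i j, G.Adj (.inr i) (.inr j) ↔ i ≠ j)
    (h12 : ∀ i j, G.Adj (.inl i) (.inr j) ↔ e i = j) :
    G.IsRegularOfDegree m ∧ edgeChromaticNumber G = m := by
  have : NeZero m := ⟨hpos.ne'⟩
  have h21 : ∀ i j, G.Adj (Sum.inr i) (Sum.inl j) ↔ e j = i := by
    intro i j; rw [G.adj_comm, h12]
  -- the injection Fin m → ZMod m
  set ι : Fin m → ZMod m := fun i => ((i : ℕ) : ZMod m) with hι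
  have ιinj : Function.Injective ι := by
    intro a b hab
    have h2 : (((a : ℕ) : ZMod m)).val = (((b : ℕ) : ZMod m)).val := congrArg ZMod.val hab
    rw [ZMod.val_cast_of_lt a.isLt, ZMod.val_cast_of_lt b.isLt] at h2
    exact Fin.ext h2
  set g : (Fin m ⊕ Fin m) → ZMod m := Sum.elim ι (fun j => ι (e.symm j)) with hg
  -- key injectivity: g is injective on the neighborhood of any vertex
  have ginj : ∀ v a b, G.Adj v a → G.Adj v b → a ≠ b → g a ≠ g b := by
    rintro (i | i) (a | a) (b | b) hva hvb hab hgab <;>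
      simp only [h11, h22, h12, h21, ne_eq] at hva hvb <;>
      simp only [hg, Sum.elim_inl, Sum.elim_inr] at hgab
    · exact hab (congrArg Sum.inl (ιinj hgab))
    · have h3 : a = e.symm b := ιinj hgab
      rw [← hvb, Equiv.symm_apply_apply] at h3
      exact hva h3.symm
    · have h3 : e.symm a = b := ιinj hgab
      rw [← hva, Equiv.symm_apply_apply] at h3
      exact hvb h3
    · exact hab (by rw [← hva, ← hvb])
    · exact hab (congrArg Sum.inl (e.injective (hva.trans hvb.symm)))
    · have h3 : a = e.symm b := ιinj hgab
      apply hvb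
      rw [← hva, h3, Equiv.apply_symm_apply]
    · have h3 : e.symm a = b := ιinj hgab
      apply hva
      rw [← hvb, ← h3, Equiv.apply_symm_apply]
    · exact hab (congrArg Sum.inr (e.symm.injective (ιinj hgab)))
  -- the edge coloring
  have C : G.lineGraph.Coloring (ZMod m) := by
    refine Coloring.mk
      (fun s => Sym2.lift ⟨fun x y => g x + g y, fun x y => add_comm _ _⟩ s.1) ?_
    rintro ⟨s₁, hs₁⟩ ⟨s₂, hs₂⟩ ⟨hne, v, hv1, hv2⟩
    obtain ⟨a, rfl⟩ := Sym2.mem_iff_exists.mp hv1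
    obtain ⟨b, rfl⟩ := Sym2.mem_iff_exists.mp hv2
    have hab : a ≠ b := by
      rintro rfl
      exact hne (Subtype.ext rfl)
    rw [SimpleGraph.mem_edgeSet] at hs₁ hs₂
    simpa using fun h => ginj v a b hs₁ hs₂ hab h
  -- generic degree computation
  have key : ∀ (v : Fin m ⊕ Fin m) (f : Fin m → Fin m ⊕ Fin m),
      Function.Injective f → (∀ x, G.Adj v x ↔ x ∈ Finset.univ.image f) →
      G.degree v = m := by
    intro v f hfinj hadj
    rw [SimpleGraph.degree, show G.neighborFinset v = Finset.univ.image f by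
      ext x; rw [SimpleGraph.mem_neighborFinset, hadj]]
    rw [Finset.card_image_of_injective _ hfinj]
    simp
  -- regularity
  have hreg : G.IsRegularOfDegree m := by
    intro v
    cases v with
    | inl i =>
      refine key (Sum.inl i) (fun j => if j = i then .inr (e i) else .inl j) ?_ ?_
      · intro a b hab
        dsimp only at hab
        by_cases ha : a = i <;> by_cases hb : b = i
        · rw [ha, hb]
        · rw [if_pos ha, if_neg hb] at hab; exact absurd hab (by simp)
        · rw [if_neg ha, if_pos hb] at hab; exact absurd hab (by simp)
        · rw [if_neg ha, if_neg hb] at hab; exact Sum.inl.inj hab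
      · rintro (x | x) <;>
          simp only [h11, h12, Finset.mem_image, Finset.mem_univ, true_and, ne_eq]
        · constructor
          · intro hx
            exact ⟨x, by rw [if_neg (fun h => hx h.symm)]⟩
          · rintro ⟨j, hj⟩
            by_cases h : j = i
            · rw [if_pos h] at hj; exact absurd hj (by simp)
            · rw [if_neg h] at hj
              intro hix
              exact h (Sum.inl.inj hj ▸ hix.symm)
        · constructor
          · intro hx
            exact ⟨i, by rw [if_pos rfl, hx]⟩
          · rintro ⟨j, hj⟩
            by_cases h : j = i
            · rw [if_pos h] at hj; exact Sum.inr.inj hj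
            · rw [if_neg h] at hj; exact absurd hj (by simp)
    | inr i =>
      refine key (Sum.inr i) (fun j => if j = i then .inl (e.symm i) else .inr j) ?_ ?_
      · intro a b hab
        dsimp only at hab
        by_cases ha : a = i <;> by_cases hb : b = i
        · rw [ha, hb]
        · rw [if_pos ha, if_neg hb] at hab; exact absurd hab (by simp)
        · rw [if_neg ha, if_pos hb] at hab; exact absurd hab (by simp)
        · rw [if_neg ha, if_neg hb] at hab; exact Sum.inr.inj hab
      · rintro (x | x) <;>
          simp only [h21, h22, Finset.mem_image, Finset.mem_univ, true_and, ne_eq]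
        · constructor
          · intro hx
            refine ⟨i, by rw [if_pos rfl, ← hx, Equiv.symm_apply_apply]⟩
          · rintro ⟨j, hj⟩
            by_cases h : j = i
            · rw [if_pos h] at hj
              rw [← Sum.inl.inj hj, Equiv.apply_symm_apply]
            · rw [if_neg h] at hj; exact absurd hj (by simp)
        · constructor
          · intro hx
            exact ⟨x, by rw [if_neg (fun h => hx h.symm)]⟩
          · rintro ⟨j, hj⟩
            by_cases h : j = i
            · rw [if_pos h] at hj; exact absurd hj (by simp)
            · rw [if_neg h] at hj
              intro hix
              exact h (Sum.inr.inj hj ▸ hix.symm)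
  refine ⟨hreg, le_antisymm ?_ ?_⟩
  · -- upper bound from the coloring
    calc edgeChromaticNumber G ≤ (Fintype.card (ZMod m) : ℕ∞) := C.colorable.chromaticNumber_le
    _ = m := by rw [ZMod.card]
  · -- lower bound: the m edges at vertex inl 0 form a clique in the line graph
    set v0 : Fin m ⊕ Fin m := .inl ⟨0, hpos⟩ with hv0
    set nbr : Fin m → Fin m ⊕ Fin m := fun j =>
      if j = ⟨0, hpos⟩ then .inr (e ⟨0, hpos⟩) else .inl j with hnbr
    have nadj : ∀ j, G.Adj v0 (nbr j) := by
      intro j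
      by_cases h : j = ⟨0, hpos⟩
      · rw [hnbr]; simp only [if_pos h, hv0]; exact (h12 _ _).mpr rfl
      · rw [hnbr]; simp only [if_neg h, hv0]; exact (h11 _ _).mpr (fun hh => h hh.symm)
    have nbrinj : Function.Injective nbr := by
      intro a b hab
      rw [hnbr] at hab
      dsimp only at hab
      by_cases ha : a = ⟨0, hpos⟩ <;> by_cases hb : b = ⟨0, hpos⟩
      · rw [ha, hb]
      · rw [if_pos ha, if_neg hb] at hab; exact absurd hab (by simp)
      · rw [if_neg ha, if_pos hb] at hab; exact absurd hab (by simp)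
      · rw [if_neg ha, if_neg hb] at hab; exact Sum.inl.inj hab
    set f : Fin m → G.edgeSet := fun j => ⟨s(v0, nbr j), (nadj j)⟩ with hf
    have finj : Function.Injective f := by
      intro a b hab
      have h4 := Subtype.ext_iff.mp hab
      rw [Sym2.eq_iff] at h4
      rcases h4 with ⟨-, h⟩ | ⟨h1, h2⟩
      · exact nbrinj h
      · exact absurd h1 (nadj b).ne
    have hclique : G.lineGraph.IsClique (Finset.univ.image f : Finset G.edgeSet) := by
      intro x hx y hy hxy
      simp only [Finset.coe_image, Set.mem_image, Finset.coe_univ, Set.image_univ,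
        Set.mem_range] at hx hy
      obtain ⟨a, rfl⟩ := hx
      obtain ⟨b, rfl⟩ := hy
      exact ⟨hxy, v0, by simp [hf], by simp [hf]⟩
    have h5 := hclique.card_le_chromaticNumber
    rwa [Finset.card_image_of_injective _ finj, Finset.card_univ, Fintype.card_fin] at h5
end

section
/- If G is a Latin square graph of even order, then both G and its complement are 1-factorable (class 1). -/
open SimpleGraph

/-- `L` is a Latin square of order `m`: every row and every column is a bijection. -/
def IsLatinSquare {m : ℕ} (L : Fin m → Fin m → Fin m) : Prop :=
  (∀ i, Function.Bijective (L i)) ∧ (∀ j, Function.Bijective fun i => L i j)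

/-!
The cells are the rows of an orthogonal array with `t + 2` coordinates (row, column, and the
symbol in each square): any two coordinates determine the cell. Hence `G` is the edge-disjoint
union, over the coordinates, of the graphs joining cells that agree in that coordinate, and each
of these is a disjoint union of `m` copies of `K_m`, which is 1-factorable for even `m` by the
round-robin construction.

For `Gᶜ`, fix a 1-factorization of `K_m` on the row indices. For each of its perfect matchings,
the edges of `Gᶜ` joining paired rows form a bipartite graph that is regular of degree
`m - t - 1`, since a cell agrees with exactly `t + 1` cells of any other row. By König's theorem
(Hall's theorem and induction on the degree) each of these graphs is 1-factorable.
-/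

open Function

universe u

namespace SimpleGraph

section OneFactorable

variable {V : Type u} {G H : SimpleGraph V}

theorem IsOneFactorable.exists_iSup_eq (hG : IsOneFactorable G) :
    ∃ (ι : Type u) (M : ι → SimpleGraph V), (∀ i v, ∃! w, (M i).Adj v w) ∧
      Pairwise (Disjoint on M) ∧ ⨆ i, M i = G := by
  obtain ⟨F, hF, huniq⟩ := hG
  refine ⟨F, fun N => N.1.spanningCoe, fun N => Subgraph.isPerfectMatching_iff.mp (hF N N.2),
    fun N N' hne => disjoint_left.mpr fun v w h h' => hne ?_, ?_⟩
  · exact Subtype.ext ((huniq s(v, w) (N.1.adj_sub h)).unique ⟨N.2, h⟩ ⟨N'.2, h'⟩)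
  · ext v w
    simp only [iSup_adj]
    refine ⟨fun ⟨N, h⟩ => N.1.adj_sub h, fun h => ?_⟩
    obtain ⟨N, ⟨hN, hvw⟩, -⟩ := huniq s(v, w) h
    exact ⟨⟨N, hN⟩, hvw⟩

theorem isOneFactorable_iSup_of_existsUnique {ι : Type*} {M : ι → SimpleGraph V}
    (hM : ∀ i v, ∃! w, (M i).Adj v w) (hdisj : Pairwise (Disjoint on M)) :
    IsOneFactorable (⨆ i, M i) := by
  refine ⟨Set.range fun i => toSubgraph (M i) (le_iSup M i), ?_, fun e he => ?_⟩
  · rintro _ ⟨i, rfl⟩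
    exact Subgraph.isPerfectMatching_iff.mpr (hM i)
  · induction e using Sym2.ind with | _ v w => ?_
    obtain ⟨i, hi⟩ := iSup_adj.mp he
    refine ⟨_, ⟨⟨i, rfl⟩, hi⟩, ?_⟩
    rintro _ ⟨⟨j, rfl⟩, hj⟩
    obtain rfl : j = i := by
      by_contra hne
      exact disjoint_left.mp (hdisj hne) v w hj hi
    rfl

theorem isOneFactorable_of_existsUnique_adj (hG : ∀ v, ∃! w, G.Adj v w) :
    IsOneFactorable G := by
  simpa using isOneFactorable_iSup_of_existsUnique (M := fun _ : Unit => G) (fun _ => hG)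
    (fun i j hij => (hij (Subsingleton.elim i j)).elim)

theorem isOneFactorable_bot : IsOneFactorable (⊥ : SimpleGraph V) :=
  ⟨∅, by simp, by simp⟩

theorem IsOneFactorable.iSup {ι : Type*} {H : ι → SimpleGraph V}
    (hdisj : Pairwise (Disjoint on H)) (hH : ∀ i, IsOneFactorable (H i)) :
    IsOneFactorable (⨆ i, H i) := by
  choose κ M hM hMdisj hMsup using fun i => (hH i).exists_iSup_eq
  have hle : ∀ i k, M i k ≤ H i := fun i k => hMsup i ▸ le_iSup (M i) k
  have hsup : ⨆ i, H i = ⨆ x : Σ i, κ i, M x.1 x.2 := by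
    simp only [iSup_sigma, hMsup]
  rw [hsup]
  refine isOneFactorable_iSup_of_existsUnique (fun x => hM x.1 x.2) ?_
  rintro ⟨i, k⟩ ⟨j, l⟩ hne
  by_cases hij : i = j
  · subst hij
    exact hMdisj i fun hkl => hne (congrArg (Sigma.mk i) hkl)
  · exact (hdisj hij).mono (hle i k) (hle j l)

theorem IsOneFactorable.sup (hdisj : Disjoint G H) (hG : IsOneFactorable G)
    (hH : IsOneFactorable H) : IsOneFactorable (G ⊔ H) := by
  rw [show G ⊔ H = ⨆ b, cond b G H from (iSup_bool_eq (f := fun b => cond b G H)).symm]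
  refine IsOneFactorable.iSup ?_ (Bool.rec hH hG)
  rintro (_ | _) (_ | _) hne
  exacts [(hne rfl).elim, hdisj.symm, hdisj, (hne rfl).elim]

theorem ncard_le_ncard_biUnion_neighborSet [Finite V] {d : ℕ}
    (hreg : ∀ v, (G.neighborSet v).ncard = d) (hd : d ≠ 0) (S : Set V) :
    S.ncard ≤ (⋃ v ∈ S, G.neighborSet v).ncard := by
  classical
  have := Fintype.ofFinite V
  set T := ⋃ v ∈ S, G.neighborSet v
  have hcount := Finset.card_mul_le_card_mul (r := G.Adj) (m := d) (n := d)
    (s := S.toFinset) (t := T.toFinset) (fun v hv => ?_) (fun w _ => ?_)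
  · rw [Set.ncard_eq_toFinset_card' S, Set.ncard_eq_toFinset_card' T]
    exact Nat.le_of_mul_le_mul_right hcount (Nat.pos_of_ne_zero hd)
  · rw [← hreg v, Set.ncard_eq_toFinset_card']
    refine Finset.card_le_card fun w hw => ?_
    simp only [Set.mem_toFinset, mem_neighborSet] at hw hv
    exact (Finset.mem_bipartiteAbove _).mpr ⟨Set.mem_toFinset.mpr (Set.mem_biUnion hv hw), hw⟩
  · rw [← hreg w, Set.ncard_eq_toFinset_card']
    refine Finset.card_le_card fun v hv => ?_
    simp only [Finset.mem_bipartiteBelow G.Adj] at hv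
    simpa using hv.2.symm

theorem isOneFactorable_of_isBipartiteWith [Finite V] {s t : Set V} {d : ℕ}
    (hbip : G.IsBipartiteWith s t) (hreg : ∀ v, (G.neighborSet v).ncard = d) :
    IsOneFactorable G := by
  induction d generalizing G with
  | zero =>
    obtain rfl : G = ⊥ := by
      ext v w
      have := (Set.ncard_eq_zero (G.neighborSet v).toFinite).mp (hreg v)
      simpa using Set.eq_empty_iff_forall_notMem.mp this w
    exact isOneFactorable_bot
  | succ d ih =>
    classical
    have := Fintype.ofFinite V
    obtain ⟨M, hM⟩ := exists_isPerfectMatching_of_forall_ncard_le hbip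
      (ncard_le_ncard_biUnion_neighborSet hreg d.succ_ne_zero)
    have hpartner := Subgraph.isPerfectMatching_iff.mp hM
    have hreg' : ∀ v, ((G \ M.spanningCoe).neighborSet v).ncard = d := by
      intro v
      obtain ⟨w, hw, huniq⟩ := hpartner v
      have : (G \ M.spanningCoe).neighborSet v = G.neighborSet v \ {w} := by
        ext u
        simp only [mem_neighborSet, sdiff_adj, Subgraph.spanningCoe_adj, Set.mem_sdiff,
          Set.mem_singleton_iff]
        exact and_congr_right fun _ => not_congr ⟨huniq u, fun h => h ▸ hw⟩
      have hwG : w ∈ G.neighborSet v := M.adj_sub hw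
      rw [this, Set.ncard_sdiff_singleton_of_mem hwG, hreg v, Nat.add_sub_cancel]
    have hbip' : (G \ M.spanningCoe).IsBipartiteWith s t :=
      ⟨hbip.disjoint, fun v w h => hbip.mem_of_adj h.1⟩
    rw [← sdiff_sup_cancel (Subgraph.spanningCoe_le M)]
    exact (ih hbip' hreg').sup disjoint_sdiff_self_left
      (isOneFactorable_of_existsUnique_adj hpartner)

end OneFactorable

variable {V W α β : Type*}

theorem iSup_inf_comap_eq {ι : Type*} {G : SimpleGraph V} {g : V → W} {R : ι → SimpleGraph W}
    (hR : ⨆ i, R i = ⊤) (hG : ∀ ⦃v w⦄, G.Adj v w → g v ≠ g w) :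
    ⨆ i, G ⊓ (R i).comap g = G := by
  ext v w
  simp only [iSup_adj, inf_adj, comap_adj]
  refine ⟨fun ⟨_, h, _⟩ => h, fun h => ?_⟩
  have : (⨆ i, R i).Adj (g v) (g w) := hR ▸ hG h
  obtain ⟨i, hi⟩ := iSup_adj.mp this
  exact ⟨i, h, hi⟩

theorem pairwise_disjoint_inf_comap {ι : Type*} (G : SimpleGraph V) (g : V → W)
    {R : ι → SimpleGraph W} (hR : Pairwise (Disjoint on R)) :
    Pairwise (Disjoint on fun i => G ⊓ (R i).comap g) := fun _ _ hij =>
  disjoint_left.mpr fun _ _ hi hj => disjoint_left.mp (hR hij) _ _ hi.2 hj.2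

theorem isBipartiteWith_of_le_comap [LinearOrder W] {R : SimpleGraph W}
    (hR : ∀ x, (R.neighborSet x).Subsingleton) {g : V → W} {H : SimpleGraph V}
    (hH : H ≤ R.comap g) :
    H.IsBipartiteWith {v | ∃ x, R.Adj (g v) x ∧ g v < x} {v | ∃ x, R.Adj (g v) x ∧ x < g v} where
  disjoint := Set.disjoint_left.mpr fun v ⟨x, hx, hlt⟩ ⟨y, hy, hgt⟩ => by
    obtain rfl := hR (g v) hx hy
    exact lt_asymm hlt hgt
  mem_of_adj v w h := by
    have hvw : R.Adj (g v) (g w) := hH h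
    rcases hvw.ne.lt_or_gt with hlt | hgt
    · exact .inl ⟨⟨g w, hvw, hlt⟩, ⟨g v, hvw.symm, hlt⟩⟩
    · exact .inr ⟨⟨g w, hvw, hgt⟩, ⟨g v, hvw.symm, hgt⟩⟩

section RoundRobin

variable {R : Type*} [CommRing R] [DecidableEq R]

-- Factor `s` of the round-robin 1-factorization of the complete graph on `R ∪ {∞}`, `∞ = none`:
-- when `2` is a unit, `{u, v}` lies in the factor `(u + v) / 2` and `{∞, u}` in the factor `u`.
def roundRobin (s : R) : Option R → Option R
  | none => some s
  | some u => if u = s then none else some (2 * s - u)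

theorem roundRobin_roundRobin (s : R) (x : Option R) : roundRobin s (roundRobin s x) = x := by
  rcases x with _ | u
  · simp [roundRobin]
  · by_cases hu : u = s
    · simp [roundRobin, hu]
    · have : 2 * s - u ≠ s := fun h => hu (by linear_combination -h)
      simp [roundRobin, hu, this]

def roundRobinGraph (s : R) : SimpleGraph (Option R) where
  Adj x y := x ≠ y ∧ roundRobin s x = y
  symm.symm _ _ h := ⟨h.1.symm, by rw [← h.2, roundRobin_roundRobin]⟩
  loopless.irrefl _ h := h.1 rfl

variable (h2 : IsUnit (2 : R))
include h2

theorem roundRobin_ne (s : R) (x : Option R) : roundRobin s x ≠ x := by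
  rcases x with _ | u
  · simp [roundRobin]
  · by_cases hu : u = s
    · simp [roundRobin, hu]
    · simp only [roundRobin, hu, if_false, ne_eq, Option.some.injEq]
      exact fun h => hu (h2.mul_left_cancel (by linear_combination h)).symm

theorem existsUnique_roundRobin_eq {x y : Option R} (hxy : x ≠ y) :
    ∃! s, roundRobin s x = y := by
  rcases x with _ | u <;> rcases y with _ | v
  · exact (hxy rfl).elim
  · exact ⟨v, rfl, fun s hs => Option.some_injective _ hs⟩
  · refine ⟨u, by simp [roundRobin], fun s hs => ?_⟩
    by_contra hne
    simp [roundRobin, Ne.symm hne] at hs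
  · have huv : u ≠ v := fun h => hxy (h ▸ rfl)
    have hmid : ∀ s, roundRobin s (some u) = some v ↔ 2 * s = u + v := fun s => by
      by_cases hu : u = s
      · subst hu
        simp only [roundRobin, if_true, reduceCtorEq, false_iff]
        exact fun h => huv (by linear_combination h)
      · simp only [roundRobin, hu, if_false, Option.some.injEq]
        constructor <;> intro h <;> linear_combination h
    simp only [hmid]
    refine ⟨↑h2.unit⁻¹ * (u + v), ?_, fun s hs => h2.mul_left_cancel ?_⟩
    · dsimp only
      rw [← mul_assoc, h2.mul_val_inv, one_mul]
    · rw [hs, ← mul_assoc, h2.mul_val_inv, one_mul]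

theorem roundRobinGraph_adj {s : R} {x y : Option R} :
    (roundRobinGraph s).Adj x y ↔ roundRobin s x = y :=
  ⟨And.right, fun h => ⟨fun hxy => roundRobin_ne h2 s x (h.trans hxy.symm), h⟩⟩

theorem iSup_roundRobinGraph : ⨆ s : R, roundRobinGraph s = ⊤ := by
  ext x y
  simp only [iSup_adj, top_adj, roundRobinGraph_adj h2]
  exact ⟨fun ⟨s, hs⟩ hxy => roundRobin_ne h2 s x (hs.trans hxy.symm),
    fun hxy => (existsUnique_roundRobin_eq h2 hxy).exists⟩

theorem pairwise_disjoint_roundRobinGraph : Pairwise (Disjoint on (roundRobinGraph (R := R))) :=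
  fun _ _ hne => disjoint_left.mpr fun _ _ h h' =>
    hne ((existsUnique_roundRobin_eq h2 h.1).unique h.2 h'.2)

end RoundRobin

theorem isOneFactorable_top_of_even_card [Fintype β] (h : Even (Fintype.card β)) :
    IsOneFactorable (⊤ : SimpleGraph β) := by
  obtain h0 | ⟨n, hn, hcard⟩ : Fintype.card β = 0 ∨ ∃ n, Odd n ∧ Fintype.card β = n + 1 := by
    rcases Nat.eq_zero_or_pos (Fintype.card β) with h0 | hpos
    · exact .inl h0
    · refine .inr ⟨Fintype.card β - 1, ?_, by omega⟩
      exact Nat.Even.sub_odd hpos h odd_one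
  · have : IsEmpty β := Fintype.card_eq_zero_iff.mp h0
    convert isOneFactorable_bot (V := β)
    ext v
    exact isEmptyElim v
  have : NeZero n := ⟨hn.pos.ne'⟩
  have h2 : IsUnit (2 : ZMod n) := by
    simpa using (ZMod.isUnit_iff_coprime 2 n).mpr (Nat.coprime_two_left.mpr hn)
  let e : β ≃ Option (ZMod n) := Fintype.equivOfCardEq (by simp [hcard])
  rw [← iSup_inf_comap_eq (G := ⊤) (g := e) (iSup_roundRobinGraph h2)
    fun v w h => e.injective.ne h]
  refine isOneFactorable_iSup_of_existsUnique (fun s v => ?_)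
    (pairwise_disjoint_inf_comap _ _ (pairwise_disjoint_roundRobinGraph h2))
  refine ⟨e.symm (roundRobin s (e v)), ?_, fun w hw => ?_⟩
  · simp only [inf_adj, top_adj, comap_adj, roundRobinGraph_adj h2, Equiv.apply_symm_apply,
      and_true]
    exact fun hv => roundRobin_ne h2 s (e v) ((congrArg e hv).trans (e.apply_symm_apply _)).symm
  · rw [Equiv.eq_symm_apply, eq_comm, ← roundRobinGraph_adj h2]
    exact hw.2

def fiberGraph (f : V → α) : SimpleGraph V where
  Adj v w := v ≠ w ∧ f v = f w
  symm.symm _ _ h := ⟨h.1.symm, h.2.symm⟩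
  loopless.irrefl _ h := h.1 rfl

@[simp]
theorem fiberGraph_adj {f : V → α} {v w : V} : (fiberGraph f).Adj v w ↔ v ≠ w ∧ f v = f w :=
  Iff.rfl

theorem isOneFactorable_fiberGraph [Fintype β] {f : V → α} {g : V → β}
    (hfg : Bijective fun v => (f v, g v)) (hβ : Even (Fintype.card β)) :
    IsOneFactorable (fiberGraph f) := by
  obtain ⟨ι, R, hR, hRdisj, hRsup⟩ := (isOneFactorable_top_of_even_card hβ).exists_iSup_eq
  rw [← iSup_inf_comap_eq (G := fiberGraph f) (g := g) hRsup
    fun v w h hg => h.1 (hfg.1 (Prod.ext h.2 hg))]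
  refine isOneFactorable_iSup_of_existsUnique (fun i v => ?_)
    (pairwise_disjoint_inf_comap _ _ hRdisj)
  obtain ⟨y, hy, huniq⟩ := hR i (g v)
  let e := Equiv.ofBijective _ hfg
  have he : ∀ w, e w = (f w, g w) := fun _ => rfl
  have hfy : f (e.symm (f v, y)) = f v := congrArg Prod.fst (e.apply_symm_apply (f v, y))
  have hgy : g (e.symm (f v, y)) = y := congrArg Prod.snd (e.apply_symm_apply (f v, y))
  refine ⟨e.symm (f v, y), ⟨⟨fun hv => hy.ne ?_, hfy.symm⟩, ?_⟩, fun w hw => ?_⟩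
  · rw [← hgy, ← hv]
  · rwa [comap_adj, hgy]
  · rw [Equiv.eq_symm_apply, he, hw.1.2, huniq _ hw.2]

end SimpleGraph

section LatinSquareGraph

variable {m t : ℕ}

theorem IsLatinSquare.eq_of_fst_eq {L : Fin m → Fin m → Fin m} (hL : IsLatinSquare L)
    {p q : Fin m × Fin m} (h1 : p.1 = q.1) (h2 : L p.1 p.2 = L q.1 q.2) : p = q :=
  Prod.ext h1 ((hL.1 q.1).1 (h1 ▸ h2))

theorem IsLatinSquare.eq_of_snd_eq {L : Fin m → Fin m → Fin m} (hL : IsLatinSquare L)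
    {p q : Fin m × Fin m} (h1 : p.2 = q.2) (h2 : L p.1 p.2 = L q.1 q.2) : p = q :=
  Prod.ext ((hL.2 q.2).1 (h1 ▸ h2 : L p.1 q.2 = L q.1 q.2)) h1

variable (L : Fin t → Fin m → Fin m → Fin m)

-- The coordinates of a cell in the orthogonal array of the squares: row, column, and its symbol
-- in each square.
def latinCoord : Option (Option (Fin t)) → Fin m × Fin m → Fin m
  | none, p => p.1
  | some none, p => p.2
  | some (some a), p => L a p.1 p.2

def latinSquareGraph : SimpleGraph (Fin m × Fin m) :=
  ⨆ c, fiberGraph (latinCoord L c)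

theorem latinSquareGraph_adj {p q : Fin m × Fin m} : (latinSquareGraph L).Adj p q ↔
    p ≠ q ∧ (p.1 = q.1 ∨ p.2 = q.2 ∨ ∃ a, L a p.1 p.2 = L a q.1 q.2) := by
  simp [latinSquareGraph, Option.exists, latinCoord]

variable {L} (hlatin : ∀ a, IsLatinSquare (L a))
  (horth : ∀ a b, a ≠ b →
    Function.Injective fun p : Fin m × Fin m => (L a p.1 p.2, L b p.1 p.2))
include hlatin horth

theorem latinCoord_injective {c d : Option (Option (Fin t))} (hcd : c ≠ d) :
    Injective fun p => (latinCoord L c p, latinCoord L d p) := by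
  intro p q h
  obtain ⟨hc, hd⟩ := Prod.ext_iff.mp h
  rcases c with _ | _ | a <;> rcases d with _ | _ | b
  · exact absurd rfl hcd
  · exact Prod.ext hc hd
  · exact (hlatin b).eq_of_fst_eq hc hd
  · exact Prod.ext hd hc
  · exact absurd rfl hcd
  · exact (hlatin b).eq_of_snd_eq hc hd
  · exact (hlatin a).eq_of_fst_eq hd hc
  · exact (hlatin a).eq_of_snd_eq hd hc
  · exact horth a b (fun hab => hcd (hab ▸ rfl)) (Prod.ext hc hd)

theorem latinCoord_bijective {c d : Option (Option (Fin t))} (hcd : c ≠ d) :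
    Bijective fun p => (latinCoord L c p, latinCoord L d p) :=
  Finite.injective_iff_bijective.mp (latinCoord_injective hlatin horth hcd)

omit hlatin horth in
theorem compl_latinSquareGraph_adj {p q : Fin m × Fin m} :
    (latinSquareGraph L)ᶜ.Adj p q ↔ ∀ c, latinCoord L c p ≠ latinCoord L c q := by
  simp only [latinSquareGraph, compl_adj, iSup_adj, fiberGraph_adj, not_exists, not_and]
  exact ⟨fun ⟨hpq, h⟩ c => h c hpq, fun h => ⟨fun hpq => h none (hpq ▸ rfl), fun c _ => h c⟩⟩

theorem ncard_compl_latinSquareGraph_adj_row (p : Fin m × Fin m) {i : Fin m} (hi : i ≠ p.1) :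
    {j | (latinSquareGraph L)ᶜ.Adj p (i, j)}.ncard = m - (t + 1) := by
  let e c := Equiv.ofBijective _ (latinCoord_bijective hlatin horth (c := none) (d := some c)
    (Option.some_ne_none c).symm)
  -- `φ c` is the column of the unique cell of row `i` that shares coordinate `some c` with `p`.
  let φ c : Fin m := ((e c).symm (i, latinCoord L (some c) p)).2
  have hφ : ∀ c j, φ c = j ↔ latinCoord L (some c) (i, j) = latinCoord L (some c) p := by
    intro c j
    have hfst : ((e c).symm (i, latinCoord L (some c) p)).1 = i :=
      congrArg Prod.fst ((e c).apply_symm_apply _)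
    calc φ c = j ↔ (e c).symm (i, latinCoord L (some c) p) = (i, j) :=
          ⟨fun h => Prod.ext hfst h, fun h => congrArg Prod.snd h⟩
      _ ↔ _ := by rw [Equiv.symm_apply_eq, eq_comm]; simp [e, latinCoord]
  have hφinj : Injective φ := by
    intro c c' h
    by_contra hne
    have := latinCoord_injective hlatin horth (Option.some_injective _ |>.ne hne)
      (a₁ := (i, φ c)) (a₂ := p) (Prod.ext ((hφ c _).mp rfl) ((hφ c' _).mp h.symm))
    exact hi (congrArg Prod.fst this)
  have hset : {j | (latinSquareGraph L)ᶜ.Adj p (i, j)} = (Set.range φ)ᶜ := by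
    ext j
    rw [Set.mem_ofPred_eq, compl_latinSquareGraph_adj, Option.forall]
    simp only [Set.mem_compl_iff, Set.mem_range, not_exists, hφ]
    exact ⟨fun h c hc => h.2 c hc.symm, fun h => ⟨hi.symm, fun c hc => h c hc.symm⟩⟩
  rw [hset, Set.ncard_compl, Set.ncard_range_of_injective hφinj]
  simp

theorem isOneFactorable_latinSquareGraph (hm : Even m) : IsOneFactorable (latinSquareGraph L) := by
  refine IsOneFactorable.iSup (fun c d hcd => disjoint_left.mpr fun p q hc hd =>
    hc.1 (latinCoord_injective hlatin horth hcd (Prod.ext hc.2 hd.2))) fun c => ?_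
  obtain ⟨d, hcd⟩ : ∃ d, c ≠ d := by
    rcases c with _ | c
    exacts [⟨some none, (Option.some_ne_none _).symm⟩, ⟨none, Option.some_ne_none c⟩]
  exact isOneFactorable_fiberGraph (latinCoord_bijective hlatin horth hcd) (by simpa using hm)

theorem isOneFactorable_compl_latinSquareGraph (hm : Even m) :
    IsOneFactorable (latinSquareGraph L)ᶜ := by
  obtain ⟨ι, R, hR, hRdisj, hRsup⟩ :=
    (isOneFactorable_top_of_even_card (β := Fin m) (by simpa using hm)).exists_iSup_eq
  rw [← iSup_inf_comap_eq (G := (latinSquareGraph L)ᶜ) (g := Prod.fst) hRsup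
    fun p q h => compl_latinSquareGraph_adj.mp h none]
  refine IsOneFactorable.iSup (pairwise_disjoint_inf_comap _ _ hRdisj) fun k => ?_
  refine isOneFactorable_of_isBipartiteWith (d := m - (t + 1))
    (isBipartiteWith_of_le_comap (fun x _ hy _ hz => (hR k x).unique hy hz) inf_le_right)
    fun p => ?_
  obtain ⟨i, hi, huniq⟩ := hR k p.1
  have : ((latinSquareGraph L)ᶜ ⊓ (R k).comap Prod.fst).neighborSet p =
      Prod.mk i '' {j | (latinSquareGraph L)ᶜ.Adj p (i, j)} := by
    ext ⟨i', j⟩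
    simp only [mem_neighborSet, inf_adj, comap_adj, Set.mem_image, Set.mem_ofPred_eq,
      Prod.mk.injEq]
    constructor
    · rintro ⟨h, h'⟩
      obtain rfl := huniq i' h'
      exact ⟨j, h, rfl, rfl⟩
    · rintro ⟨j, h, rfl, rfl⟩
      exact ⟨h, hi⟩
  rw [this, Set.ncard_image_of_injective _ (Prod.mk_right_injective i),
    ncard_compl_latinSquareGraph_adj_row hlatin horth p hi.ne.symm]

end LatinSquareGraph

theorem stmt_6_general (m t : ℕ) (L : Fin t → Fin m → Fin m → Fin m)
    (hlatin : ∀ a, IsLatinSquare (L a))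
    (horth : ∀ a b, a ≠ b →
      Function.Injective fun p : Fin m × Fin m => (L a p.1 p.2, L b p.1 p.2))
    (G : SimpleGraph (Fin m × Fin m))
    (hadj : ∀ p q, G.Adj p q ↔
      p ≠ q ∧ (p.1 = q.1 ∨ p.2 = q.2 ∨ ∃ a, L a p.1 p.2 = L a q.1 q.2))
    (heven : Even (m * m)) :
    IsOneFactorable G ∧ IsOneFactorable Gᶜ := by
  obtain rfl : G = latinSquareGraph L := by
    ext p q
    rw [hadj, latinSquareGraph_adj]
  have hm : Even m := (Nat.even_mul.mp heven).elim id id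
  exact ⟨isOneFactorable_latinSquareGraph hlatin horth hm,
    isOneFactorable_compl_latinSquareGraph hlatin horth hm⟩

/-- Corollary 2.4: the Latin square graph of a set of mutually orthogonal Latin squares of
order `m ≥ 2`, when it has even order, is 1-factorable, and so is its complement. -/
theorem stmt_6 (m t : ℕ) (hm : 2 ≤ m) (L : Fin t → Fin m → Fin m → Fin m)
    (hlatin : ∀ a, IsLatinSquare (L a))
    (horth : ∀ a b, a ≠ b →
      Function.Injective fun p : Fin m × Fin m => (L a p.1 p.2, L b p.1 p.2))
    (G : SimpleGraph (Fin m × Fin m))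
    (hadj : ∀ p q, G.Adj p q ↔
      p ≠ q ∧ (p.1 = q.1 ∨ p.2 = q.2 ∨ ∃ a, L a p.1 p.2 = L a q.1 q.2))
    (heven : Even (m * m)) :
    IsOneFactorable G ∧ IsOneFactorable Gᶜ :=
  stmt_6_general m t L hlatin horth G hadj heven
end
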